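/- If a conjunction ⋀Ψ (a delayed formula of HML_srbb) distinguishes a process p from a nonempty set Q (with respect to ⟦·⟧^ε), then expr^ε(⋀Ψ) ∈ Win_a((p,Q)_d) in the weak spectroscopy energy game G△. -/

import Mathlib

open Classical

noncomputable section

namespace Spectroscopy

/-! ### Energies and declining energy games -/

/-- Energies: 8-dimensional vectors over `ℕ ∪ {∞}`, ordered componentwise. -/
abbrev Energy : Type := Fin 8 → ℕ∞

/-- The `i`-th unit vector. -/
def unitE (i : Fin 8) : Energy := fun k => if k = i then 1 else 0

/-- The vector with value `v` at position `i` and `0` elsewhere. -/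
def onlyAt (i : Fin 8) (v : ℕ∞) : Energy := fun k => if k = i then v else 0

/-- Components of energy updates: `-1`, `0`, or minimum selection `min_D`.
For the component at position `k`, `minWith D` selects the minimum over the
positions `{k} ∪ D`, so the requirement `k ∈ D` of the paper holds by
construction. -/
inductive UpdComp : Type
  | decr : UpdComp
  | zero : UpdComp
  | minWith (D : Finset (Fin 8)) : UpdComp
deriving DecidableEq

/-- Energy updates. -/
abbrev Update : Type := Fin 8 → UpdComp

/-- Partial application of an update to an energy (`none` when a component
would become negative). -/
def upd (e : Energy) (u : Update) : Option Energy :=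
  if ∀ k, u k = UpdComp.decr → e k ≠ 0 then
    some (fun k =>
      match u k with
      | UpdComp.decr => e k - 1
      | UpdComp.zero => e k
      | UpdComp.minWith D => (insert k D).inf e)
  else none

/-- A declining energy game: positions, a defender predicate (attacker
positions are the non-defender ones), and moves labeled with updates. -/
structure EGame (Pos : Type) where
  defender : Pos → Prop
  move : Pos → Update → Pos → Prop

/-- Attacker winning budgets `Win_a`: at an attacker position some move must
lead to an attacker-won position under the updated energy; at a defender
position every move must (be defined and) lead to an attacker-won position. -/
inductive EGame.Win {Pos : Type} (G : EGame Pos) : Pos → Energy → Prop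
  | attack {g : Pos} {u : Update} {g' : Pos} {e e' : Energy} :
      ¬ G.defender g → G.move g u g' → upd e u = some e' → G.Win g' e' →
      G.Win g e
  | defend {g : Pos} {e : Energy} :
      G.defender g →
      (∀ u g', G.move g u g' → upd e u ≠ none) →
      (∀ u g' e', G.move g u g' → upd e u = some e' → G.Win g' e') →
      G.Win g e

/-! ### Labeled transition systems with silent steps -/

section LTS

variable {Proc Act : Type}

/-- Weak internal steps `↠`: reflexive-transitive closure of `τ`-steps. -/
def Star (Tr : Proc → Act → Proc → Prop) (τ : Act) : Proc → Proc → Prop :=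
  Relation.ReflTransGen fun p p' => Tr p τ p'

/-- A process is stable if it has no `τ`-step. -/
def Stable (Tr : Proc → Act → Proc → Prop) (τ : Act) (p : Proc) : Prop :=
  ∀ p', ¬ Tr p τ p'

/-- Optional step `p →(α) p'`: a real `α`-step, or `α = τ` and `p = p'`. -/
def OptStep (Tr : Proc → Act → Proc → Prop) (τ : Act) (p : Proc) (α : Act) (p' : Proc) : Prop :=
  Tr p α p' ∨ (α = τ ∧ p = p')

/-- Lift of `→a` to sets. -/
def SetStep (Tr : Proc → Act → Proc → Prop) (Q : Set Proc) (a : Act) (Q' : Set Proc) : Prop :=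
  Q' = {q' | ∃ q ∈ Q, Tr q a q'}

/-- Lift of `↠` to sets. -/
def SetStar (Tr : Proc → Act → Proc → Prop) (τ : Act) (Q Q' : Set Proc) : Prop :=
  Q' = {q' | ∃ q ∈ Q, Star Tr τ q q'}

/-- Lift of `→(α)` to sets. -/
def SetOpt (Tr : Proc → Act → Proc → Prop) (τ : Act) (Q : Set Proc) (α : Act)
    (Q' : Set Proc) : Prop :=
  Q' = {q' | ∃ q ∈ Q, OptStep Tr τ q α q'}

end LTS

/-! ### The logic HML_srbb -/

mutual
/-- Formulas `φ` of HML_srbb: `⟨ε⟩χ` or immediate conjunctions `⋀Ψ`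
(conjunctions are indexed by an arbitrary type). `⊤` is the empty conjunction. -/
inductive Formula (Act : Type) (τ : Act) : Type 1
  | delayed : DFormula Act τ → Formula Act τ
  | conj : (I : Type) → (I → Conjunct Act τ) → Formula Act τ

/-- Delayed formulas `χ`: observations `⟨a⟩φ` (with `a ≠ τ`), standard
conjunctions `⋀Ψ`, stable conjunctions `⋀({¬⟨τ⟩⊤} ∪ Ψ)`, and branching
conjunctions `⋀({(α)φ} ∪ Ψ)`. -/
inductive DFormula (Act : Type) (τ : Act) : Type 1
  | obs : (a : Act) → a ≠ τ → Formula Act τ → DFormula Act τ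
  | conj : (I : Type) → (I → Conjunct Act τ) → DFormula Act τ
  | stableConj : (I : Type) → (I → Conjunct Act τ) → DFormula Act τ
  | branchConj : (α : Act) → Formula Act τ → (I : Type) → (I → Conjunct Act τ) → DFormula Act τ

/-- Conjuncts `ψ`: positive `⟨ε⟩χ` or negative `¬⟨ε⟩χ`. -/
inductive Conjunct (Act : Type) (τ : Act) : Type 1
  | pos : DFormula Act τ → Conjunct Act τ
  | neg : DFormula Act τ → Conjunct Act τ
end

section Semantics

variable {Proc Act : Type}

mutual
/-- Semantics `⟦φ⟧`. -/
def Sat (Tr : Proc → Act → Proc → Prop) (τ : Act) (p : Proc) : Formula Act τ → Prop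
  | .delayed χ => ∃ p', Star Tr τ p p' ∧ SatD Tr τ p' χ
  | .conj _ ps => ∀ i, SatC Tr τ p (ps i)

/-- Semantics `⟦χ⟧^ε` of delayed formulas. -/
def SatD (Tr : Proc → Act → Proc → Prop) (τ : Act) (p : Proc) : DFormula Act τ → Prop
  | .obs a _ φ => ∃ p', Tr p a p' ∧ Sat Tr τ p' φ
  | .conj _ ps => ∀ i, SatC Tr τ p (ps i)
  | .stableConj _ ps => Stable Tr τ p ∧ ∀ i, SatC Tr τ p (ps i)
  | .branchConj α φ _ ps =>
      (∃ p', OptStep Tr τ p α p' ∧ Sat Tr τ p' φ) ∧ ∀ i, SatC Tr τ p (ps i)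

/-- Semantics `⟦ψ⟧^∧` of conjuncts. -/
def SatC (Tr : Proc → Act → Proc → Prop) (τ : Act) (p : Proc) : Conjunct Act τ → Prop
  | .pos χ => ∃ p', Star Tr τ p p' ∧ SatD Tr τ p' χ
  | .neg χ => ¬ ∃ p', Star Tr τ p p' ∧ SatD Tr τ p' χ
end

/-- `φ` distinguishes `p` from the set `Q`. -/
def Distinguishes (Tr : Proc → Act → Proc → Prop) (τ : Act) (φ : Formula Act τ)
    (p : Proc) (Q : Set Proc) : Prop :=
  Sat Tr τ p φ ∧ ∀ q ∈ Q, ¬ Sat Tr τ q φ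

/-- The delayed formula `χ` distinguishes `p` from the set `Q` w.r.t. `⟦·⟧^ε`. -/
def DistinguishesD (Tr : Proc → Act → Proc → Prop) (τ : Act) (χ : DFormula Act τ)
    (p : Proc) (Q : Set Proc) : Prop :=
  SatD Tr τ p χ ∧ ∀ q ∈ Q, ¬ SatD Tr τ q χ

/-- The conjunct `ψ` distinguishes `p` from `q` w.r.t. `⟦·⟧^∧`. -/
def DistinguishesC (Tr : Proc → Act → Proc → Prop) (τ : Act) (ψ : Conjunct Act τ)
    (p q : Proc) : Prop :=
  SatC Tr τ p ψ ∧ ¬ SatC Tr τ q ψ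

/-- Stability-respecting branching bisimulations: symmetric relations with the
branching-bisimulation transfer property and the stability-respecting
property. -/
def IsSRBBisim (Tr : Proc → Act → Proc → Prop) (τ : Act) (R : Proc → Proc → Prop) : Prop :=
  Symmetric R ∧
  (∀ p q, R p q → ∀ α p', Tr p α p' →
    (α = τ ∧ R p' q) ∨
      ∃ q' q'', Star Tr τ q q' ∧ Tr q' α q'' ∧ R p q' ∧ R p' q'') ∧
  (∀ p q, R p q → Stable Tr τ p →
    ∃ q', Star Tr τ q q' ∧ Stable Tr τ q' ∧ R p q')

end Semantics

/-! ### Expressiveness prices -/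

section Expr

variable {Act : Type} {τ : Act}

mutual
/-- Expressiveness price `expr` of formulas. -/
def exprF : Formula Act τ → Energy
  | .delayed χ => exprE χ
  | .conj I ps => ⨆ _ : Nonempty I, ((unitE 4 + unitE 2) + ⨆ i, exprC (ps i))

/-- Expressiveness price `expr^ε` of delayed formulas. -/
def exprE : DFormula Act τ → Energy
  | .obs _ _ φ => unitE 0 + exprF φ
  | .conj I ps => ⨆ _ : Nonempty I, (unitE 2 + ⨆ i, exprC (ps i))
  | .stableConj _ ps => unitE 3 + ⨆ i, exprC (ps i)
  | .branchConj _ φ _ ps =>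
      (unitE 1 + unitE 2) +
        (((unitE 0 + exprF φ) ⊔ onlyAt 5 (1 + exprF φ 0)) ⊔ ⨆ i, exprC (ps i))

/-- Expressiveness price `expr^∧` of conjuncts. -/
def exprC : Conjunct Act τ → Energy
  | .pos χ => exprE χ ⊔ onlyAt 5 (exprE χ 0)
  | .neg χ => (unitE 7 + exprE χ) ⊔ onlyAt 6 (exprE χ 0)
end

end Expr

/-! ### The weak spectroscopy energy game -/

/-- Positions of the weak spectroscopy game. -/
inductive GPos (Proc Act : Type) : Type
  | att (p : Proc) (Q : Set Proc)                                 -- `[p,Q]_a`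
  | attD (p : Proc) (Q : Set Proc)                                -- `[p,Q]^ε_a`
  | attC (p q : Proc)                                             -- `[p,q]^∧_a`
  | attB (p : Proc) (Q : Set Proc)                                -- `[p,Q]^η_a`
  | defC (p : Proc) (Q : Set Proc)                                -- `(p,Q)_d`
  | defS (p : Proc) (Q : Set Proc)                                -- `(p,Q)^s_d`
  | defB (p : Proc) (α : Act) (p' : Proc) (Q Qa : Set Proc)       -- `(p,α,p',Q,Qa)^η_d`

/-- The zero update. -/
def zeroU : Update := fun _ => UpdComp.zero

/-- The update `-ê_i`. -/
def decU (i : Fin 8) : Update := fun k => if k = i then UpdComp.decr else UpdComp.zero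

/-- The update `(min_{1,6},0,0,0,0,0,0,0)`. -/
def minU16 : Update := fun k => if k = 0 then UpdComp.minWith {5} else UpdComp.zero

/-- The update `(min_{1,7},0,0,0,0,0,0,-1)`. -/
def minU17dec8 : Update := fun k =>
  if k = 0 then UpdComp.minWith {6} else if k = 7 then UpdComp.decr else UpdComp.zero

/-- The update `(0,-1,-1,0,0,0,0,0)`. -/
def dec23 : Update := fun k => if k = 1 ∨ k = 2 then UpdComp.decr else UpdComp.zero

/-- The update `(min_{1,6},-1,-1,0,0,0,0,0)`. -/
def minU16dec23 : Update := fun k =>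
  if k = 0 then UpdComp.minWith {5}
  else if k = 1 ∨ k = 2 then UpdComp.decr else UpdComp.zero

section Game

variable {Proc Act : Type}

/-- Moves of the weak spectroscopy game. -/
inductive GMove (Tr : Proc → Act → Proc → Prop) (τ : Act) :
    GPos Proc Act → Update → GPos Proc Act → Prop
  | delay {p : Proc} {Q Q' : Set Proc} :
      SetStar Tr τ Q Q' →
      GMove Tr τ (.att p Q) zeroU (.attD p Q')
  | procrastination {p p' : Proc} {Q : Set Proc} :
      Tr p τ p' → p ≠ p' →
      GMove Tr τ (.attD p Q) zeroU (.attD p' Q)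
  | observation {p p' : Proc} {a : Act} {Q Q' : Set Proc} :
      Tr p a p' → a ≠ τ → SetStep Tr Q a Q' →
      GMove Tr τ (.attD p Q) (decU 0) (.att p' Q')
  | finishing {p : Proc} :
      GMove Tr τ (.att p ∅) zeroU (.defC p ∅)
  | immediateConj {p : Proc} {Q : Set Proc} :
      Q ≠ ∅ →
      GMove Tr τ (.att p Q) (decU 4) (.defC p Q)
  | lateConj {p : Proc} {Q : Set Proc} :
      GMove Tr τ (.attD p Q) zeroU (.defC p Q)
  | conjAnswer {p q : Proc} {Q : Set Proc} :
      q ∈ Q →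
      GMove Tr τ (.defC p Q) (decU 2) (.attC p q)
  | posConjunct {p q : Proc} {Q : Set Proc} :
      SetStar Tr τ {q} Q →
      GMove Tr τ (.attC p q) minU16 (.attD p Q)
  | negConjunct {p q : Proc} {Q : Set Proc} :
      SetStar Tr τ {p} Q → p ≠ q →
      GMove Tr τ (.attC p q) minU17dec8 (.attD q Q)
  | stableConj {p : Proc} {Q : Set Proc} :
      Stable Tr τ p →
      GMove Tr τ (.attD p Q) zeroU (.defS p {q ∈ Q | Stable Tr τ q})
  | conjStableAnswer {p q : Proc} {Q : Set Proc} :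
      q ∈ Q →
      GMove Tr τ (.defS p Q) (decU 3) (.attC p q)
  | stableFinishing {p : Proc} :
      GMove Tr τ (.defS p ∅) (decU 3) (.defC p ∅)
  | branchConj {p p' : Proc} {α : Act} {Q Qa : Set Proc} :
      OptStep Tr τ p α p' → Qa ⊆ Q →
      GMove Tr τ (.attD p Q) zeroU (.defB p α p' (Q \ Qa) Qa)
  | branchAnswer {p p' q : Proc} {α : Act} {Q Qa : Set Proc} :
      q ∈ Q →
      GMove Tr τ (.defB p α p' Q Qa) dec23 (.attC p q)
  | branchObservation {p p' : Proc} {α : Act} {Q Qa Q' : Set Proc} :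
      SetOpt Tr τ Qa α Q' →
      GMove Tr τ (.defB p α p' Q Qa) minU16dec23 (.attB p' Q')
  | branchAccounting {p : Proc} {Q : Set Proc} :
      GMove Tr τ (.attB p Q) (decU 0) (.att p Q)

/-- Defender positions of the weak spectroscopy game. -/
def isDefender : GPos Proc Act → Prop
  | .defC _ _ => True
  | .defS _ _ => True
  | .defB _ _ _ _ _ => True
  | _ => False

/-- The weak spectroscopy energy game `G△`. -/
def specGame (Tr : Proc → Act → Proc → Prop) (τ : Act) : EGame (GPos Proc Act) where
  defender := isDefender
  move := GMove Tr τ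

end Game

/-! ### Strategy formulas -/

section Strat

variable {Proc Act : Type}

mutual
/-- Attacker strategy formulas (formula sort). -/
inductive StratF (Tr : Proc → Act → Proc → Prop) (τ : Act) :
    GPos Proc Act → Energy → Formula Act τ → Prop
  | delay {p : Proc} {Q Q' : Set Proc} {u : Update} {e e' : Energy} {χ : DFormula Act τ} :
      GMove Tr τ (.att p Q) u (.attD p Q') →
      upd e u = some e' →
      (specGame Tr τ).Win (.attD p Q') e' →
      StratD Tr τ (.attD p Q') e' χ →
      StratF Tr τ (.att p Q) e (.delayed χ)
  | immediateConj {p : Proc} {Q : Set Proc} {u : Update} {e e' : Energy}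
      {I : Type} {ps : I → Conjunct Act τ} :
      GMove Tr τ (.att p Q) u (.defC p Q) →
      upd e u = some e' →
      (specGame Tr τ).Win (.defC p Q) e' →
      StratD Tr τ (.defC p Q) e' (.conj I ps) →
      StratF Tr τ (.att p Q) e (.conj I ps)

/-- Attacker strategy formulas (delayed-formula sort). -/
inductive StratD (Tr : Proc → Act → Proc → Prop) (τ : Act) :
    GPos Proc Act → Energy → DFormula Act τ → Prop
  | procrastination {p p' : Proc} {Q : Set Proc} {u : Update} {e e' : Energy}
      {χ : DFormula Act τ} :
      GMove Tr τ (.attD p Q) u (.attD p' Q) →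
      upd e u = some e' →
      (specGame Tr τ).Win (.attD p' Q) e' →
      StratD Tr τ (.attD p' Q) e' χ →
      StratD Tr τ (.attD p Q) e χ
  | observation {p p' : Proc} {a : Act} {Q Q' : Set Proc} {u : Update} {e e' : Energy}
      {φ : Formula Act τ} (ha : a ≠ τ) :
      GMove Tr τ (.attD p Q) u (.att p' Q') →
      Tr p a p' → SetStep Tr Q a Q' →
      upd e u = some e' →
      (specGame Tr τ).Win (.att p' Q') e' →
      StratF Tr τ (.att p' Q') e' φ →
      StratD Tr τ (.attD p Q) e (.obs a ha φ)
  | lateConj {p : Proc} {Q : Set Proc} {u : Update} {e e' : Energy} {χ : DFormula Act τ} :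
      GMove Tr τ (.attD p Q) u (.defC p Q) →
      upd e u = some e' →
      (specGame Tr τ).Win (.defC p Q) e' →
      StratD Tr τ (.defC p Q) e' χ →
      StratD Tr τ (.attD p Q) e χ
  | stable {p : Proc} {Q Q' : Set Proc} {u : Update} {e e' : Energy} {χ : DFormula Act τ} :
      GMove Tr τ (.attD p Q) u (.defS p Q') →
      upd e u = some e' →
      (specGame Tr τ).Win (.defS p Q') e' →
      StratD Tr τ (.defS p Q') e' χ →
      StratD Tr τ (.attD p Q) e χ
  | branch {p p' : Proc} {α : Act} {Q Q' Qa : Set Proc} {u : Update} {e e' : Energy}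
      {χ : DFormula Act τ} :
      GMove Tr τ (.attD p Q) u (.defB p α p' Q' Qa) →
      upd e u = some e' →
      (specGame Tr τ).Win (.defB p α p' Q' Qa) e' →
      StratD Tr τ (.defB p α p' Q' Qa) e' χ →
      StratD Tr τ (.attD p Q) e χ
  | conj {p : Proc} {Q : Set Proc} {e : Energy}
      (us : {q // q ∈ Q} → Update) (es : {q // q ∈ Q} → Energy)
      (ψs : {q // q ∈ Q} → Conjunct Act τ) :
      (∀ qq : {q // q ∈ Q}, GMove Tr τ (.defC p Q) (us qq) (.attC p qq.1)) →
      (∀ qq : {q // q ∈ Q}, upd e (us qq) = some (es qq)) →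
      (∀ qq : {q // q ∈ Q}, (specGame Tr τ).Win (.attC p qq.1) (es qq)) →
      (∀ qq : {q // q ∈ Q}, StratC Tr τ (.attC p qq.1) (es qq) (ψs qq)) →
      StratD Tr τ (.defC p Q) e (.conj {q // q ∈ Q} ψs)
  | stableConj {p : Proc} {Q : Set Proc} {e : Energy}
      (hne : Q.Nonempty)
      (us : {q // q ∈ Q} → Update) (es : {q // q ∈ Q} → Energy)
      (ψs : {q // q ∈ Q} → Conjunct Act τ) :
      (∀ qq : {q // q ∈ Q}, GMove Tr τ (.defS p Q) (us qq) (.attC p qq.1)) →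
      (∀ qq : {q // q ∈ Q}, upd e (us qq) = some (es qq)) →
      (∀ qq : {q // q ∈ Q}, (specGame Tr τ).Win (.attC p qq.1) (es qq)) →
      (∀ qq : {q // q ∈ Q}, StratC Tr τ (.attC p qq.1) (es qq) (ψs qq)) →
      StratD Tr τ (.defS p Q) e (.stableConj {q // q ∈ Q} ψs)
  | stableFinish {p : Proc} {u : Update} {e e' : Energy} :
      GMove Tr τ (.defS p ∅) u (.defC p ∅) →
      upd e u = some e' →
      (specGame Tr τ).Win (.defC p (∅ : Set Proc)) e' →
      StratD Tr τ (.defS p ∅) e (.stableConj Empty fun x => x.elim)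
  | branchConj {p p' : Proc} {α : Act} {Q Qa Q' : Set Proc} {ua ua' : Update}
      {e e1 ea : Energy} {φa : Formula Act τ}
      (us : {q // q ∈ Q} → Update) (es : {q // q ∈ Q} → Energy)
      (ψs : {q // q ∈ Q} → Conjunct Act τ) :
      GMove Tr τ (.defB p α p' Q Qa) ua (.attB p' Q') →
      GMove Tr τ (.attB p' Q') ua' (.att p' Q') →
      upd e ua = some e1 →
      upd e1 ua' = some ea →
      (specGame Tr τ).Win (.att p' Q') ea →
      StratF Tr τ (.att p' Q') ea φa →
      (∀ qq : {q // q ∈ Q}, GMove Tr τ (.defB p α p' Q Qa) (us qq) (.attC p qq.1)) →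
      (∀ qq : {q // q ∈ Q}, upd e (us qq) = some (es qq)) →
      (∀ qq : {q // q ∈ Q}, (specGame Tr τ).Win (.attC p qq.1) (es qq)) →
      (∀ qq : {q // q ∈ Q}, StratC Tr τ (.attC p qq.1) (es qq) (ψs qq)) →
      StratD Tr τ (.defB p α p' Q Qa) e (.branchConj α φa {q // q ∈ Q} ψs)

/-- Attacker strategy formulas (conjunct sort). -/
inductive StratC (Tr : Proc → Act → Proc → Prop) (τ : Act) :
    GPos Proc Act → Energy → Conjunct Act τ → Prop
  | pos {p q : Proc} {Q' : Set Proc} {u : Update} {e e' : Energy} {χ : DFormula Act τ} :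
      GMove Tr τ (.attC p q) u (.attD p Q') →
      upd e u = some e' →
      (specGame Tr τ).Win (.attD p Q') e' →
      StratD Tr τ (.attD p Q') e' χ →
      StratC Tr τ (.attC p q) e (.pos χ)
  | neg {p q : Proc} {P' : Set Proc} {u : Update} {e e' : Energy} {χ : DFormula Act τ} :
      GMove Tr τ (.attC p q) u (.attD q P') →
      upd e u = some e' →
      (specGame Tr τ).Win (.attD q P') e' →
      StratD Tr τ (.attD q P') e' χ →
      StratC Tr τ (.attC p q) e (.neg χ)
end

end Strat

/-! By mutual structural induction on formulas, delayed formulas and conjuncts, a formula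
distinguishing `p` from `Q` is turned into an attacker strategy from `[p,Q]_a` (from `[p,Q]^ε_a`
after `p ↠ p'`, from `[p,q]^∧_a` for conjuncts) whose cost is bounded by the formula's price.
Every syntactic construct is matched by a move of `G△`, and the summand the price adds for that
construct pays exactly for the move's energy update; the `min_{1,6}` and `min_{1,7}` updates
of the conjunct moves are covered by the `ê₆`/`ê₇` correction terms of `expr^∧`. Since
attacker budgets are upward closed, the budgets from the induction hypotheses can be
enlarged to the price. -/

end Spectroscopy

lemma ENat.one_add_tsub_one (a : ℕ∞) : 1 + a - 1 = a :=
  (ENat.addLECancellable_of_ne_top ENat.one_ne_top).add_tsub_cancel_left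

namespace Spectroscopy

section Updates

lemma upd_mono {e f e' : Energy} {u : Update} (he : upd e u = some e') (hle : e ≤ f) :
    ∃ f', upd f u = some f' ∧ e' ≤ f' := by
  unfold upd at he ⊢
  split_ifs at he with hdef
  cases he
  have hdef' : ∀ k, u k = UpdComp.decr → f k ≠ 0 := fun k hk h0 =>
    hdef k hk (nonpos_iff_eq_zero.mp (h0 ▸ hle k))
  refine ⟨_, if_pos hdef', fun k => ?_⟩
  dsimp only
  split
  · exact tsub_le_tsub_right (hle k) 1
  · exact hle k
  · exact Finset.inf_mono_fun fun d _ => hle d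

lemma upd_zeroU (e : Energy) : upd e zeroU = some e := by
  rw [upd, if_pos (by simp [zeroU])]
  rfl

lemma upd_unitE_add_decU (i : Fin 8) (e : Energy) : upd (unitE i + e) (decU i) = some e := by
  rw [upd, if_pos (by intro k; by_cases hk : k = i <;> simp [decU, unitE, hk])]
  congr 1
  funext k
  by_cases hk : k = i <;> simp [decU, unitE, hk, ENat.one_add_tsub_one]

lemma upd_minU16 (e : Energy) : upd e minU16 = some (Function.update e 0 (e 0 ⊓ e 5)) := by
  rw [upd, if_pos (by intro k; by_cases hk : k = 0 <;> simp [minU16, hk])]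
  congr 1
  funext k
  by_cases hk : k = 0 <;> simp [minU16, hk]

lemma upd_unitE_add_minU17dec8 (e : Energy) :
    upd (unitE 7 + e) minU17dec8 = some (Function.update e 0 (e 0 ⊓ e 6)) := by
  rw [upd, if_pos (by intro k; fin_cases k <;> simp [minU17dec8, unitE])]
  congr 1
  funext k
  fin_cases k <;> simp [minU17dec8, unitE, ENat.one_add_tsub_one]

lemma upd_unitE_add_dec23 (e : Energy) : upd (unitE 1 + unitE 2 + e) dec23 = some e := by
  rw [upd, if_pos (by intro k; fin_cases k <;> simp [dec23, unitE])]
  congr 1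
  funext k
  fin_cases k <;> simp [dec23, unitE, ENat.one_add_tsub_one]

lemma upd_unitE_add_minU16dec23 (e : Energy) :
    upd (unitE 1 + unitE 2 + e) minU16dec23 = some (Function.update e 0 (e 0 ⊓ e 5)) := by
  rw [upd, if_pos (by intro k; fin_cases k <;> simp [minU16dec23, unitE])]
  congr 1
  funext k
  fin_cases k <;> simp [minU16dec23, unitE, ENat.one_add_tsub_one]

lemma le_update_inf {x e : Energy} {i j : Fin 8} (hle : x ≤ e) (hij : x i ≤ e j) :
    x ≤ Function.update e i (e i ⊓ e j) := by
  intro k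
  by_cases hk : k = i
  · subst hk; simpa using ⟨hle k, hij⟩
  · simpa [hk] using hle k

end Updates

section Winning

variable {Pos : Type} {G : EGame Pos}

lemma EGame.Win.of_forall_move {g : Pos} {e : Energy} (hg : G.defender g)
    (h : ∀ u g', G.move g u g' → ∃ e', upd e u = some e' ∧ G.Win g' e') : G.Win g e := by
  refine .defend hg (fun u g' hm => ?_) (fun u g' e' hm he => ?_)
  · obtain ⟨e', he, -⟩ := h u g' hm
    simp [he]
  · obtain ⟨e'', he'', hwin⟩ := h u g' hm
    rw [he, Option.some_inj] at he''
    exact he'' ▸ hwin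

lemma EGame.Win.mono {g : Pos} {e f : Energy} (h : G.Win g e) (hle : e ≤ f) : G.Win g f := by
  induction h generalizing f with
  | attack hg hm he _ ih =>
    obtain ⟨f', hf', hle'⟩ := upd_mono he hle
    exact .attack hg hm hf' (ih hle')
  | defend hg hdef _ ih =>
    refine .of_forall_move hg fun u g' hm => ?_
    obtain ⟨e', he'⟩ := Option.ne_none_iff_exists'.mp (hdef u g' hm)
    obtain ⟨f', hf', hle'⟩ := upd_mono he' hle
    exact ⟨f', hf', ih u g' e' hm he' hle'⟩

lemma EGame.Win.iSup {ι : Type} {g : Pos} {f : ι → Energy} (h : ∃ i, G.Win g (f i)) :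
    G.Win g (⨆ i, f i) :=
  let ⟨i, hi⟩ := h
  hi.mono (le_iSup f i)

end Winning

section Game

variable {Proc Act : Type} {Tr : Proc → Act → Proc → Prop} {τ : Act}

lemma win_defC_empty (p : Proc) (e : Energy) : (specGame Tr τ).Win (.defC p ∅) e :=
  .of_forall_move trivial fun _ _ hm => by
    cases hm with | conjAnswer hq => exact absurd hq (Set.notMem_empty _)

lemma win_defC {p : Proc} {Q : Set Proc} {S : Energy}
    (h : ∀ q ∈ Q, (specGame Tr τ).Win (.attC p q) S) :
    (specGame Tr τ).Win (.defC p Q) (unitE 2 + S) :=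
  .of_forall_move trivial fun _ _ hm => by
    cases hm with | conjAnswer hq => exact ⟨S, upd_unitE_add_decU 2 S, h _ hq⟩

lemma win_defS {p : Proc} {Q : Set Proc} {S : Energy}
    (h : ∀ q ∈ Q, (specGame Tr τ).Win (.attC p q) S) :
    (specGame Tr τ).Win (.defS p Q) (unitE 3 + S) :=
  .of_forall_move trivial fun _ _ hm => by
    cases hm with
    | conjStableAnswer hq => exact ⟨S, upd_unitE_add_decU 3 S, h _ hq⟩
    | stableFinishing => exact ⟨S, upd_unitE_add_decU 3 S, win_defC_empty p S⟩

lemma win_defB {p p' : Proc} {α : Act} {Q Qa : Set Proc} {B : Energy}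
    (hanswer : ∀ q ∈ Q, (specGame Tr τ).Win (.attC p q) B)
    (hobserve : ∀ Q', SetOpt Tr τ Qa α Q' →
      (specGame Tr τ).Win (.attB p' Q') (Function.update B 0 (B 0 ⊓ B 5))) :
    (specGame Tr τ).Win (.defB p α p' Q Qa) (unitE 1 + unitE 2 + B) :=
  .of_forall_move trivial fun _ _ hm => by
    cases hm with
    | branchAnswer hq => exact ⟨B, upd_unitE_add_dec23 B, hanswer _ hq⟩
    | branchObservation hQ' => exact ⟨_, upd_unitE_add_minU16dec23 B, hobserve _ hQ'⟩

lemma win_attD_of_star {p p' : Proc} {Q : Set Proc} {e : Energy} (hstar : Star Tr τ p p')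
    (h : (specGame Tr τ).Win (.attD p' Q) e) : (specGame Tr τ).Win (.attD p Q) e := by
  induction hstar using Relation.ReflTransGen.head_induction_on with
  | refl => exact h
  | @head a b hstep _ ih =>
    by_cases hab : a = b
    · exact hab ▸ ih
    · exact .attack id (GMove.procrastination hstep hab) (upd_zeroU e) ih

end Game

section Prices

variable {Act : Type} {τ : Act}

lemma exprE_conj {I : Type} [Nonempty I] (ps : I → Conjunct Act τ) :
    exprE (.conj I ps) = unitE 2 + ⨆ i, exprC (ps i) := by
  simp only [exprE, iSup_pos ‹Nonempty I›]

lemma exprF_conj {I : Type} [Nonempty I] (ps : I → Conjunct Act τ) :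
    exprF (.conj I ps) = unitE 4 + exprE (.conj I ps) := by
  simp only [exprF, exprE, iSup_pos ‹Nonempty I›, add_assoc]

lemma exprC_neg (χ : DFormula Act τ) :
    exprC (.neg χ) = unitE 7 + (exprE χ ⊔ onlyAt 6 (exprE χ 0)) := by
  funext k
  by_cases hk : k = 7 <;> by_cases hk' : k = 6 <;> simp_all [exprC, unitE, onlyAt]

lemma le_update_inf_sup_onlyAt (x : Energy) (i j : Fin 8) :
    x ≤ Function.update (x ⊔ onlyAt j (x i)) i ((x ⊔ onlyAt j (x i)) i ⊓ (x ⊔ onlyAt j (x i)) j) :=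
  le_update_inf le_sup_left (le_sup_of_le_right (by simp [onlyAt]))

end Prices

section Distinctions

variable {Proc Act : Type} {Tr : Proc → Act → Proc → Prop} {τ : Act}

lemma exists_distinguishesC {I : Type} {ps : I → Conjunct Act τ} {p q : Proc}
    (hp : ∀ i, SatC Tr τ p (ps i)) (hq : ¬ ∀ i, SatC Tr τ q (ps i)) :
    ∃ i, DistinguishesC Tr τ (ps i) p q :=
  (not_forall.mp hq).imp fun i hi => ⟨hp i, hi⟩

lemma win_defC_conj {I : Type} {ps : I → Conjunct Act τ} {p : Proc} {Q : Set Proc}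
    (hQ : Q.Nonempty) (h : ∀ q ∈ Q, ∃ i, (specGame Tr τ).Win (.attC p q) (exprC (ps i))) :
    (specGame Tr τ).Win (.defC p Q) (exprE (.conj I ps)) := by
  obtain ⟨q₀, hq₀⟩ := hQ
  have : Nonempty I := ⟨(h q₀ hq₀).choose⟩
  rw [exprE_conj]
  exact win_defC fun q hq => .iSup (h q hq)

mutual

theorem win_att_of_distinguishes :
    ∀ (φ : Formula Act τ) (p : Proc) (Q : Set Proc),
      Distinguishes Tr τ φ p Q → (specGame Tr τ).Win (.att p Q) (exprF φ)
  | .delayed χ, p, Q, ⟨⟨p', hpp', hp'⟩, hQ⟩ =>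
    .attack id (GMove.delay rfl) (upd_zeroU _) <|
      win_attD_of_star_distinguishesD χ p p' _ hpp'
        ⟨hp', fun _ ⟨q, hq, hqq'⟩ hq' => hQ q hq ⟨_, hqq', hq'⟩⟩
  | .conj I ps, p, Q, ⟨hp, hQ⟩ => by
    rcases Q.eq_empty_or_nonempty with rfl | hQne
    · exact .attack id GMove.finishing (upd_zeroU _) (win_defC_empty p _)
    have : Nonempty I := ⟨(not_forall.mp (hQ _ hQne.some_mem)).choose⟩
    rw [exprF_conj]
    refine .attack id (GMove.immediateConj hQne.ne_empty) (upd_unitE_add_decU 4 _) ?_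
    exact win_defC_conj hQne fun q hq =>
      (exists_distinguishesC hp (hQ q hq)).imp fun i =>
        win_attC_of_distinguishesC (ps i) p q

theorem win_attD_of_star_distinguishesD :
    ∀ (χ : DFormula Act τ) (p p' : Proc) (Q : Set Proc),
      Star Tr τ p p' → DistinguishesD Tr τ χ p' Q → (specGame Tr τ).Win (.attD p Q) (exprE χ)
  | .obs a ha φ, p, p', Q, hstar, ⟨⟨p'', hstep, hp''⟩, hQ⟩ =>
    win_attD_of_star hstar <|
      .attack id (GMove.observation hstep ha rfl) (upd_unitE_add_decU 0 _) <|
        win_att_of_distinguishes φ p'' _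
          ⟨hp'', fun _ ⟨q, hq, hqq'⟩ hq' => hQ q hq ⟨_, hqq', hq'⟩⟩
  | .conj I ps, p, p', Q, hstar, ⟨hp', hQ⟩ => by
    refine win_attD_of_star hstar (.attack id GMove.lateConj (upd_zeroU _) ?_)
    rcases Q.eq_empty_or_nonempty with rfl | hQne
    · exact win_defC_empty p' _
    exact win_defC_conj hQne fun q hq =>
      (exists_distinguishesC hp' (hQ q hq)).imp fun i =>
        win_attC_of_distinguishesC (ps i) p' q
  | .stableConj I ps, p, p', Q, hstar, ⟨⟨hstable, hp'⟩, hQ⟩ =>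
    win_attD_of_star hstar <|
      .attack id (GMove.stableConj hstable) (upd_zeroU _) <|
        win_defS fun q ⟨hq, hqstable⟩ =>
          .iSup <| (exists_distinguishesC hp' fun hall => hQ q hq ⟨hqstable, hall⟩).imp
            fun i => win_attC_of_distinguishesC (ps i) p' q
  | .branchConj α φ I ps, p, p', Q, hstar, ⟨⟨⟨p'', hstep, hp''⟩, hp'⟩, hQ⟩ => by
    -- The observation branch must refute exactly those `q ∈ Q` that satisfy every `ps i`.
    refine win_attD_of_star hstar <| .attack id
      (GMove.branchConj (Qa := {q ∈ Q | ∀ i, SatC Tr τ q (ps i)}) hstep (Set.sep_subset _ _))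
      (upd_zeroU _) (win_defB ?_ ?_)
    · rintro q ⟨hq, hqfails⟩
      refine .mono (.iSup ?_) le_sup_right
      exact (exists_distinguishesC hp' fun hall => hqfails ⟨hq, hall⟩).imp fun i =>
        win_attC_of_distinguishesC (ps i) p' q
    · rintro Q' rfl
      refine .mono (.attack id GMove.branchAccounting (upd_unitE_add_decU 0 _) <|
        win_att_of_distinguishes φ p'' _
          ⟨hp'', fun _ ⟨q, ⟨hq, hqall⟩, hqq'⟩ hq' => hQ q hq ⟨⟨_, hqq', hq'⟩, hqall⟩⟩) ?_
      exact le_update_inf (le_sup_left.trans le_sup_left)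
        (le_sup_of_le_left (le_sup_of_le_right (by simp [unitE, onlyAt])))

theorem win_attC_of_distinguishesC :
    ∀ (ψ : Conjunct Act τ) (p q : Proc),
      DistinguishesC Tr τ ψ p q → (specGame Tr τ).Win (.attC p q) (exprC ψ)
  | .pos χ, p, q, ⟨⟨p', hpp', hp'⟩, hq⟩ =>
    .attack id (GMove.posConjunct rfl) (upd_minU16 _) <|
      .mono (win_attD_of_star_distinguishesD χ p p' _ hpp'
        ⟨hp', fun _ ⟨_, rfl, hqq'⟩ hq' => hq ⟨_, hqq', hq'⟩⟩)
        (le_update_inf_sup_onlyAt _ 0 5)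
  | .neg χ, p, q, ⟨hp, hq⟩ => by
    obtain ⟨q', hqq', hq'⟩ := not_not.mp hq
    have hpq : p ≠ q := by rintro rfl; exact hp ⟨q', hqq', hq'⟩
    rw [exprC_neg]
    exact .attack id (GMove.negConjunct rfl hpq) (upd_unitE_add_minU17dec8 _) <|
      .mono (win_attD_of_star_distinguishesD χ q q' _ hqq'
        ⟨hq', fun _ ⟨_, rfl, hpp'⟩ hp' => hp ⟨_, hpp', hp'⟩⟩)
        (le_update_inf_sup_onlyAt _ 0 6)

end

end Distinctions

/-- if a conjunction `⋀Ψ` distinguishes `p` from nonempty `Q`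
(w.r.t. `⟦·⟧^ε`), then `expr^ε(⋀Ψ)` is attacker-winning at `(p,Q)_d`. -/
theorem distinction_price_in_win_conjunction {Proc Act : Type}
    (Tr : Proc → Act → Proc → Prop) (τ : Act)
    (I : Type) (ps : I → Conjunct Act τ) (p : Proc) (Q : Set Proc)
    (hQ : Q.Nonempty)
    (h : DistinguishesD Tr τ (DFormula.conj I ps) p Q) :
    (specGame Tr τ).Win (.defC p Q) (exprE (DFormula.conj I ps)) :=
  win_defC_conj hQ fun q hq =>
    (exists_distinguishesC h.1 (h.2 q hq)).imp fun i => win_attC_of_distinguishesC (ps i) p q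

end Spectroscopy
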